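/- arXiv:2003.00630 — 5 statements merged into one kernel-verified Lean document; each statement's English description precedes it below -/
import Mathlib

section
/- Fix a nonempty finite set y ⊆ [n], c̄ : [n] → ℝ, θ ≥ 0, r ≥ 1, and let t*(y) = max{ t : Σ_{j ∈ y, t ≥ c̄_j} (t − c̄_j)^r ≤ θ^r }. Then min_{j∈y} c̄_j + θ/|y|^{1/r} ≤ t*(y) ≤ min_{j∈y} c̄_j + θ. -/
/-!
Write `m = min_{j ∈ y} c̄ j`. Every active term `(t - c̄ j) ^ r` is at most `(t - m) ^ r`, and there
are at most `|y|` of them, so `t = m + θ / |y| ^ (1 / r)` is feasible and `t* ≥ t`. Conversely the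
term of a minimiser of `c̄` is active at any `t ≥ m`, so feasibility of `t*` forces
`(t* - m) ^ r ≤ θ ^ r`, i.e. `t* ≤ m + θ`.
-/

open Finset

section ExcessSum

variable {ι : Type*} {s : Finset ι} (hs : s.Nonempty) (c : ι → ℝ) {r t : ℝ}

theorem sum_filter_sub_rpow_le_card_mul (hr : 0 ≤ r) (hm : s.inf' hs c ≤ t) :
    ∑ j ∈ s.filter (fun j => c j ≤ t), (t - c j) ^ r ≤ #s * (t - s.inf' hs c) ^ r := by
  have hterm : ∀ j ∈ s.filter (fun j => c j ≤ t), (t - c j) ^ r ≤ (t - s.inf' hs c) ^ r := by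
    intro j hj
    rw [mem_filter] at hj
    exact Real.rpow_le_rpow (by linarith [hj.2]) (by linarith [s.inf'_le c hj.1]) hr
  calc ∑ j ∈ s.filter (fun j => c j ≤ t), (t - c j) ^ r
      ≤ #(s.filter (fun j => c j ≤ t)) * (t - s.inf' hs c) ^ r := by
        simpa only [nsmul_eq_mul] using sum_le_card_nsmul _ _ _ hterm
    _ ≤ #s * (t - s.inf' hs c) ^ r := by
        gcongr
        exact filter_subset _ s

theorem sub_inf'_rpow_le_sum_filter (hm : s.inf' hs c ≤ t) :
    (t - s.inf' hs c) ^ r ≤ ∑ j ∈ s.filter (fun j => c j ≤ t), (t - c j) ^ r := by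
  obtain ⟨j₀, hj₀, hj₀_eq⟩ := s.exists_mem_eq_inf' hs c
  have hj₀_mem : j₀ ∈ s.filter (fun j => c j ≤ t) := mem_filter.mpr ⟨hj₀, hj₀_eq ▸ hm⟩
  rw [hj₀_eq]
  exact single_le_sum (fun j hj => Real.rpow_nonneg (sub_nonneg.mpr (mem_filter.mp hj).2) r)
    hj₀_mem

theorem le_inf'_add_of_sum_filter_sub_rpow_le {θ : ℝ} (hθ : 0 ≤ θ) (hr : 0 < r)
    (hsum : ∑ j ∈ s.filter (fun j => c j ≤ t), (t - c j) ^ r ≤ θ ^ r) :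
    t ≤ s.inf' hs c + θ := by
  rcases lt_or_ge t (s.inf' hs c) with hlt | hm
  · linarith
  have hpow := (sub_inf'_rpow_le_sum_filter hs c hm).trans hsum
  linarith [(Real.rpow_le_rpow_iff (sub_nonneg.mpr hm) hθ hr).mp hpow]

end ExcessSum

theorem div_rpow_inv_rpow_mul {θ k r : ℝ} (hθ : 0 ≤ θ) (hk : 0 < k) (hr : r ≠ 0) :
    k * (θ / k ^ (1 / r)) ^ r = θ ^ r := by
  rw [Real.div_rpow hθ (by positivity), ← Real.rpow_mul hk.le, one_div_mul_cancel hr,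
    Real.rpow_one, mul_div_cancel₀ _ hk.ne']

/-- Bounds on the optimal value `t*(y)` of the robust bottleneck inner
problem: `min_{j∈y} c̄_j + θ/|y|^{1/r} ≤ t*(y) ≤ min_{j∈y} c̄_j + θ`. -/
theorem robust_bottleneck_inner_bounds (n : ℕ) (y : Finset (Fin n))
    (hy : y.Nonempty) (cbar : Fin n → ℝ) (θ r tstar : ℝ) (hθ : 0 ≤ θ) (hr : 1 ≤ r)
    (ht : IsGreatest
      {t : ℝ | ∑ j ∈ y.filter (fun j => cbar j ≤ t), (t - cbar j) ^ r ≤ θ ^ r}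
      tstar) :
    y.inf' hy cbar + θ / (y.card : ℝ) ^ (1 / r) ≤ tstar ∧
      tstar ≤ y.inf' hy cbar + θ := by
  have hr₀ : 0 < r := one_pos.trans_le hr
  have hcard : (0 : ℝ) < #y := by exact_mod_cast hy.card_pos
  refine ⟨ht.2 ?_, le_inf'_add_of_sum_filter_sub_rpow_le hy cbar hθ hr₀ ht.1⟩
  set t₀ := y.inf' hy cbar + θ / (#y : ℝ) ^ (1 / r)
  have hm : y.inf' hy cbar ≤ t₀ := le_add_of_nonneg_right (by positivity)
  calc ∑ j ∈ y.filter (fun j => cbar j ≤ t₀), (t₀ - cbar j) ^ r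
      ≤ #y * (t₀ - y.inf' hy cbar) ^ r := sum_filter_sub_rpow_le_card_mul hy cbar hr₀.le hm
    _ = θ ^ r := by
        rw [add_sub_cancel_left]
        exact div_rpow_inv_rpow_mul hθ hcard hr₀.ne'
end

section
/- Let F be a finite nonempty family of nonempty subsets of [n], let c̄^1,...,c̄^N : [n] → ℝ, θ ≥ 0, r ≥ 1. Define v_U = (1/N) Σ_{k=1}^N max_{y ∈ F} max{ min_{j∈y} c_j : ‖c − c̄^k‖_r ≤ θ } and v^{SAA} = (1/N) Σ_{k=1}^N max_{y ∈ F} min_{j∈y} c̄^k_j. Then θ / (max_{y∈F} |y|^{1/r}) ≤ v_U − v^{SAA} ≤ θ. -/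
/-!
For a single scenario `a`, write `m_y(c) = min_{j ∈ y} c_j`. Every coordinate of a point `c` of the
ℓ_r ball of radius `θ` around `a` lies within `θ` of `a`, so `m_y(c) ≤ m_y(a) + θ`: the robust value
exceeds the nominal one by at most `θ`. Conversely, shifting `a` up by `δ` on a maximising `y` costs
`|y|^{1/r} δ` in ℓ_r norm and raises `m_y` by exactly `δ`, so `δ = θ / max_{y ∈ F} |y|^{1/r}` is
admissible. Both bounds hold scenario by scenario and survive averaging.
-/

/-- The ℓ_r norm on `Fin n → ℝ` for a real exponent `r`. -/
noncomputable def lpNorm {n : ℕ} (r : ℝ) (v : Fin n → ℝ) : ℝ :=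
  (∑ j, |v j| ^ r) ^ (1 / r)

open Finset
open scoped BigOperators

section LpNorm

variable {n : ℕ} {r : ℝ}

lemma abs_le_lpNorm (hr : 0 < r) (v : Fin n → ℝ) (j : Fin n) : |v j| ≤ lpNorm r v :=
  calc |v j| = (|v j| ^ r) ^ (1 / r) := by
        rw [← Real.rpow_mul (abs_nonneg _), mul_one_div_cancel hr.ne', Real.rpow_one]
    _ ≤ lpNorm r v := Real.rpow_le_rpow (by positivity)
        (single_le_sum (f := fun i => |v i| ^ r) (fun i _ => by positivity) (mem_univ j))
        (by positivity)

lemma lpNorm_indicator_const (hr : r ≠ 0) (s : Finset (Fin n)) {δ : ℝ} (hδ : 0 ≤ δ) :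
    lpNorm r (fun j => if j ∈ s then δ else 0) = (#s : ℝ) ^ (1 / r) * δ := by
  have hsum : ∑ j, |if j ∈ s then δ else 0| ^ r = #s * δ ^ r := by
    simp_rw [apply_ite (fun x : ℝ => |x| ^ r), abs_of_nonneg hδ, abs_zero,
      Real.zero_rpow hr, sum_ite_mem, univ_inter, sum_const, nsmul_eq_mul]
  rw [lpNorm, hsum, Real.mul_rpow (by positivity) (by positivity), ← Real.rpow_mul hδ,
    mul_one_div_cancel hr, Real.rpow_one]

lemma lpNorm_zero (hr : r ≠ 0) : lpNorm r (0 : Fin n → ℝ) = 0 := by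
  simp [lpNorm, Real.zero_rpow hr, Real.zero_rpow (inv_ne_zero hr)]

end LpNorm

section Scenario

variable {n : ℕ} (F : Finset (Finset (Fin n))) (θ r : ℝ) (a : Fin n → ℝ)

def robustValues : Set ℝ :=
  {t | ∃ y ∈ F, ∃ c : Fin n → ℝ, lpNorm r (fun j => c j - a j) ≤ θ ∧ t = sInf (c '' ↑y)}

def nominalValues : Set ℝ :=
  {t | ∃ y ∈ F, t = sInf (a '' ↑y)}

noncomputable def robustValue : ℝ := sSup (robustValues F θ r a)

noncomputable def nominalValue : ℝ := sSup (nominalValues F a)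

variable {F θ r a}

lemma nominalValues_finite : (nominalValues F a).Finite :=
  (F.finite_toSet.image fun y : Finset (Fin n) => sInf (a '' ↑y)).subset <| by
    rintro _ ⟨y, hy, rfl⟩
    exact ⟨y, hy, rfl⟩

lemma sInf_image_le_nominalValue {y : Finset (Fin n)} (hy : y ∈ F) :
    sInf (a '' ↑y) ≤ nominalValue F a :=
  le_csSup nominalValues_finite.bddAbove ⟨y, hy, rfl⟩

lemma exists_nominalValue_eq (hF : F.Nonempty) : ∃ y ∈ F, nominalValue F a = sInf (a '' ↑y) :=
  let ⟨y, hy⟩ := hF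
  have hne : (nominalValues F a).Nonempty := ⟨_, y, hy, rfl⟩
  nominalValues_finite.isCompact.sSup_mem hne

lemma sInf_image_le_add_of_abs_sub_le {y : Finset (Fin n)} (hy : y.Nonempty) {c : Fin n → ℝ}
    (hc : ∀ j, |c j - a j| ≤ θ) : sInf (c '' ↑y) ≤ sInf (a '' ↑y) + θ := by
  rw [← inf'_eq_csInf_image y hy, ← inf'_eq_csInf_image y hy]
  obtain ⟨j, hj, hmin⟩ := exists_mem_eq_inf' hy a
  calc y.inf' hy c ≤ c j := inf'_le c hj
    _ ≤ a j + θ := by linarith [(abs_le.mp (hc j)).2]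
    _ = y.inf' hy a + θ := by rw [hmin]

lemma sInf_image_add_const {y : Finset (Fin n)} (hy : y.Nonempty) (δ : ℝ) :
    sInf ((fun j => a j + δ) '' ↑y) = sInf (a '' ↑y) + δ := by
  calc sInf ((fun j => a j + δ) '' ↑y) = sInf (OrderIso.addRight δ '' (a '' ↑y)) := by
        rw [Set.image_image]; rfl
    _ = OrderIso.addRight δ (sInf (a '' ↑y)) := (OrderIso.map_csInf' _
        ((coe_nonempty.mpr hy).image a) (y.finite_toSet.image a).bddBelow).symm
    _ = sInf (a '' ↑y) + δ := rfl

lemma le_nominalValue_add_of_mem_robustValues (hr : 0 < r) (hne : ∀ y ∈ F, y.Nonempty) {t : ℝ}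
    (ht : t ∈ robustValues F θ r a) :
    t ≤ nominalValue F a + θ := by
  obtain ⟨y, hy, c, hc, rfl⟩ := ht
  calc sInf (c '' ↑y) ≤ sInf (a '' ↑y) + θ := sInf_image_le_add_of_abs_sub_le (hne y hy)
        fun j => (abs_le_lpNorm hr _ j).trans hc
    _ ≤ nominalValue F a + θ := by gcongr; exact sInf_image_le_nominalValue hy

lemma robustValue_le_nominalValue_add (hF : F.Nonempty) (hne : ∀ y ∈ F, y.Nonempty)
    (hθ : 0 ≤ θ) (hr : 0 < r) : robustValue F θ r a ≤ nominalValue F a + θ := by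
  obtain ⟨y, hy⟩ := hF
  refine csSup_le ⟨_, y, hy, a, ?_, rfl⟩
    fun _ ht => le_nominalValue_add_of_mem_robustValues hr hne ht
  simpa [Pi.zero_def] using (lpNorm_zero (n := n) hr.ne').trans_le hθ

lemma le_robustValue (hr : 0 < r) (hne : ∀ y ∈ F, y.Nonempty) {y : Finset (Fin n)} (hy : y ∈ F)
    {c : Fin n → ℝ} (hc : lpNorm r (fun j => c j - a j) ≤ θ) :
    sInf (c '' ↑y) ≤ robustValue F θ r a :=
  le_csSup ⟨_, fun _ ht => le_nominalValue_add_of_mem_robustValues hr hne ht⟩ ⟨y, hy, c, hc, rfl⟩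

lemma nominalValue_add_le_robustValue (hF : F.Nonempty) (hne : ∀ y ∈ F, y.Nonempty)
    (hθ : 0 ≤ θ) (hr : 0 < r) :
    nominalValue F a + θ / F.sup' hF (fun y => (#y : ℝ) ^ (1 / r)) ≤ robustValue F θ r a := by
  set M := F.sup' hF fun y => (#y : ℝ) ^ (1 / r)
  obtain ⟨y, hy, hmax⟩ := exists_nominalValue_eq (a := a) hF
  have hM : 0 < M := lt_of_lt_of_le (by have := (hne y hy).card_pos; positivity)
    (le_sup' (fun y => (#y : ℝ) ^ (1 / r)) hy)
  set δ := θ / M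
  have hδ : 0 ≤ δ := div_nonneg hθ hM.le
  let c : Fin n → ℝ := fun j => a j + if j ∈ y then δ else 0
  have hc : lpNorm r (fun j => c j - a j) ≤ θ := by
    simp_rw [c, add_sub_cancel_left, lpNorm_indicator_const hr.ne' y hδ]
    calc (#y : ℝ) ^ (1 / r) * δ ≤ M * δ := by
          gcongr; exact le_sup' (fun y => (#y : ℝ) ^ (1 / r)) hy
      _ = θ := mul_div_cancel₀ θ hM.ne'
  have hcy : c '' ↑y = (fun j => a j + δ) '' ↑y :=
    Set.image_congr fun j hj => by simp [c, Finset.mem_coe.mp hj]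
  calc nominalValue F a + δ = sInf (c '' ↑y) := by
        rw [hcy, sInf_image_add_const (hne y hy), hmax]
    _ ≤ robustValue F θ r a := le_robustValue hr hne hy hc

end Scenario

/-- With `v_U` the DRBCP-U value (inner maximization over an ℓ_r ball of
radius θ around each sample) and `v^{SAA}` its sample-average counterpart,
`θ / max_{y∈F} |y|^{1/r} ≤ v_U − v^{SAA} ≤ θ`. -/
theorem drbcp_u_saa_bounds (n N : ℕ) (hN : 0 < N)
    (F : Finset (Finset (Fin n))) (hF : F.Nonempty) (hne : ∀ y ∈ F, y.Nonempty)
    (cbar : Fin N → Fin n → ℝ) (θ r : ℝ) (hθ : 0 ≤ θ) (hr : 1 ≤ r)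
    (vU vSAA : ℝ)
    (hvU : vU = (1 / N : ℝ) * ∑ k : Fin N,
      sSup {t : ℝ | ∃ y ∈ F, ∃ c : Fin n → ℝ,
        lpNorm r (fun j => c j - cbar k j) ≤ θ ∧ t = sInf (c '' ↑y)})
    (hvSAA : vSAA = (1 / N : ℝ) * ∑ k : Fin N,
      sSup {t : ℝ | ∃ y ∈ F, t = sInf (cbar k '' ↑y)}) :
    θ / (F.sup' hF fun y => ((y.card : ℝ) ^ (1 / r))) ≤ vU - vSAA ∧
      vU - vSAA ≤ θ := by
  have hr0 : 0 < r := one_pos.trans_le hr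
  have hgap : vU - vSAA = 𝔼 k, (robustValue F θ r (cbar k) - nominalValue F (cbar k)) := by
    rw [hvU, hvSAA, ← mul_sub, ← sum_sub_distrib, Fintype.expect_eq_sum_div_card,
      Fintype.card_fin, one_div_mul_eq_div]
    rfl
  have huniv : (univ : Finset (Fin N)).Nonempty := ⟨⟨0, hN⟩, mem_univ _⟩
  rw [hgap]
  exact ⟨le_expect huniv fun k _ =>
      le_sub_iff_add_le'.mpr (nominalValue_add_le_robustValue hF hne hθ hr0),
    expect_le huniv fun k _ =>
      sub_le_iff_le_add'.mpr (robustValue_le_nominalValue_add hF hne hθ hr0)⟩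
end

section
/- Let X̄ be a nonempty clutter on [n] whose members all have cardinality at least Γ, and let F_Γ be the Γ-blocker of X̄: the unique family of inclusion-minimal subcollections y ⊆ binom([n],Γ) satisfying y ∩ binom(h,Γ) ≠ ∅ for every h ∈ X̄. Then for every cost vector c : [n] → ℝ, min_{h ∈ X̄} max_{s ⊆ h, |s| = Γ} Σ_{j∈s} c_j = max_{y ∈ F_Γ} min_{s ∈ y} Σ_{j∈s} c_j. -/
/-!
Both sides equal the bottleneck value `L = min_h max_{s ⊆ h, |s| = Γ} c(s)`. Any member of the
Γ-blocker meets `binom(h, Γ)` for every `h`, so its minimum is at most each `max_{binom(h, Γ)} c`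
(weak duality). Conversely the threshold family `{s : |s| = Γ, L ≤ c(s)}` meets every
`binom(h, Γ)` in a maximiser, and any inclusion-minimal subfamily of it still doing so is a member
of the Γ-blocker whose minimum is at least `L`.
-/

section ExtremeValues

variable {ι R : Type*} [ConditionallyCompleteLinearOrder R]

theorem Finset.isGreatest_sSup_setOf_exists_mem {A : Finset ι} (hA : A.Nonempty) (f : ι → R) :
    IsGreatest {u | ∃ s ∈ A, u = f s} (sSup {u | ∃ s ∈ A, u = f s}) := by
  have hfin : {u | ∃ s ∈ A, u = f s}.Finite :=
    (A.finite_toSet.image f).subset fun _ ⟨s, hs, hu⟩ => ⟨s, hs, hu.symm⟩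
  obtain ⟨s, hs⟩ := hA
  exact ⟨Set.Nonempty.csSup_mem ⟨f s, s, hs, rfl⟩ hfin, fun _ hu => le_csSup hfin.bddAbove hu⟩

theorem Finset.isLeast_sInf_setOf_exists_mem {A : Finset ι} (hA : A.Nonempty) (f : ι → R) :
    IsLeast {u | ∃ s ∈ A, u = f s} (sInf {u | ∃ s ∈ A, u = f s}) := by
  have hfin : {u | ∃ s ∈ A, u = f s}.Finite :=
    (A.finite_toSet.image f).subset fun _ ⟨s, hs, hu⟩ => ⟨s, hs, hu.symm⟩
  obtain ⟨s, hs⟩ := hA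
  exact ⟨Set.Nonempty.csInf_mem ⟨f s, s, hs, rfl⟩ hfin, fun _ hu => csInf_le hfin.bddBelow hu⟩

theorem sInf_le_sSup_of_inter_nonempty [DecidableEq ι] {y A : Finset ι} (hyA : (y ∩ A).Nonempty)
    (f : ι → R) : sInf {u | ∃ s ∈ y, u = f s} ≤ sSup {u | ∃ s ∈ A, u = f s} := by
  obtain ⟨s, hs⟩ := hyA
  obtain ⟨hsy, hsA⟩ := Finset.mem_inter.1 hs
  exact ((Finset.isLeast_sInf_setOf_exists_mem ⟨s, hsy⟩ f).2 ⟨s, hsy, rfl⟩).trans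
    ((Finset.isGreatest_sSup_setOf_exists_mem ⟨s, hsA⟩ f).2 ⟨s, hsA, rfl⟩)

end ExtremeValues

section Transversals

variable {α β R : Type*} [DecidableEq α] [ConditionallyCompleteLinearOrder R]

def IsTransversal (X : Finset β) (A : β → Finset α) (y : Finset α) : Prop :=
  ∀ h ∈ X, (y ∩ A h).Nonempty

theorem IsTransversal.exists_minimal_subset {X : Finset β} {A : β → Finset α} {y : Finset α}
    (hy : IsTransversal X A y) :
    ∃ z ⊆ y, IsTransversal X A z ∧ ∀ w ⊂ z, ¬ IsTransversal X A w := by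
  obtain ⟨z, hzy, hz⟩ := exists_minimal_le_of_wellFoundedLT (IsTransversal X A) y hy
  exact ⟨z, hzy, hz.prop, fun _ hwz => hz.not_prop_of_lt hwz⟩

theorem IsTransversal.nonempty {X : Finset β} {A : β → Finset α} {y : Finset α}
    (hy : IsTransversal X A y) (hX : X.Nonempty) : y.Nonempty := by
  obtain ⟨h, hh⟩ := hX
  obtain ⟨s, hs⟩ := hy h hh
  exact ⟨s, (Finset.mem_inter.1 hs).1⟩

variable {U : Finset α} {X : Finset β} {A : β → Finset α} {F : Set (Finset α)}

theorem exists_mem_le_sInf_of_minimal_transversals (hX : X.Nonempty) (hAU : ∀ h ∈ X, A h ⊆ U)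
    (hF : ∀ y, y ∈ F ↔ y ⊆ U ∧ IsTransversal X A y ∧ ∀ z ⊂ y, ¬ IsTransversal X A z)
    (f : α → R) {L : R} (hL : ∀ h ∈ X, ∃ s ∈ A h, L ≤ f s) :
    ∃ y ∈ F, L ≤ sInf {u | ∃ s ∈ y, u = f s} := by
  have hthreshold : IsTransversal X A (U.filter (L ≤ f ·)) := fun h hh => by
    obtain ⟨s, hs, hLs⟩ := hL h hh
    exact ⟨s, Finset.mem_inter.2 ⟨Finset.mem_filter.2 ⟨hAU h hh hs, hLs⟩, hs⟩⟩
  obtain ⟨y, hyU, hy, hymin⟩ := hthreshold.exists_minimal_subset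
  refine ⟨y, (hF y).2 ⟨hyU.trans (Finset.filter_subset _ _), hy, hymin⟩, ?_⟩
  obtain ⟨s, hs, hmin⟩ := (Finset.isLeast_sInf_setOf_exists_mem (hy.nonempty hX) f).1
  rw [hmin]
  exact (Finset.mem_filter.1 (hyU hs)).2

theorem sInf_sSup_eq_sSup_sInf_of_minimal_transversals (hX : X.Nonempty)
    (hAU : ∀ h ∈ X, A h ⊆ U) (hA : ∀ h ∈ X, (A h).Nonempty)
    (hF : ∀ y, y ∈ F ↔ y ⊆ U ∧ IsTransversal X A y ∧ ∀ z ⊂ y, ¬ IsTransversal X A z)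
    (f : α → R) :
    sInf {t | ∃ h ∈ X, t = sSup {u | ∃ s ∈ A h, u = f s}} =
      sSup {t | ∃ y ∈ F, t = sInf {u | ∃ s ∈ y, u = f s}} := by
  set M : β → R := fun h => sSup {u | ∃ s ∈ A h, u = f s}
  obtain ⟨h₀, hh₀, hM₀⟩ := X.exists_min_image M hX
  have hmax : ∀ h ∈ X, ∃ s ∈ A h, M h₀ ≤ f s := fun h hh => by
    obtain ⟨s, hs, hMs⟩ := (Finset.isGreatest_sSup_setOf_exists_mem (hA h hh) f).1
    exact ⟨s, hs, hMs ▸ hM₀ h hh⟩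
  have hweak : ∀ y ∈ F, sInf {u | ∃ s ∈ y, u = f s} ≤ M h₀ := fun y hyF =>
    sInf_le_sSup_of_inter_nonempty (((hF y).1 hyF).2.1 h₀ hh₀) f
  obtain ⟨y, hyF, hy⟩ := exists_mem_le_sInf_of_minimal_transversals hX hAU hF f hmax
  have hleast : IsLeast {t | ∃ h ∈ X, t = M h} (M h₀) :=
    ⟨⟨h₀, hh₀, rfl⟩, fun _ ⟨h, hh, ht⟩ => ht ▸ hM₀ h hh⟩
  have hgreatest : IsGreatest {t | ∃ y ∈ F, t = sInf {u | ∃ s ∈ y, u = f s}} (M h₀) :=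
    ⟨⟨y, hyF, (le_antisymm (hweak y hyF) hy).symm⟩, fun _ ⟨y', hy'F, ht⟩ => ht ▸ hweak y' hy'F⟩
  rw [hleast.csInf_eq, hgreatest.csSup_eq]

end Transversals

theorem gamma_sum_blocker_duality_general (n Γ : ℕ)
    (Xbar : Finset (Finset (Fin n))) (hXne : Xbar.Nonempty)
    (hcard : ∀ h ∈ Xbar, Γ ≤ h.card)
    (FΓ : Finset (Finset (Finset (Fin n))))
    (hFΓ : ∀ y : Finset (Finset (Fin n)), y ∈ FΓ ↔
      (y ⊆ Finset.powersetCard Γ (Finset.univ : Finset (Fin n)) ∧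
        (∀ h ∈ Xbar, (y ∩ Finset.powersetCard Γ h).Nonempty) ∧
        ∀ z ⊂ y, ¬ (∀ h ∈ Xbar, (z ∩ Finset.powersetCard Γ h).Nonempty)))
    (c : Fin n → ℝ) :
    sInf {t : ℝ | ∃ h ∈ Xbar, t =
        sSup {u : ℝ | ∃ s ∈ Finset.powersetCard Γ h, u = ∑ j ∈ s, c j}} =
      sSup {t : ℝ | ∃ y ∈ FΓ, t = sInf {u : ℝ | ∃ s ∈ y, u = ∑ j ∈ s, c j}} :=
  sInf_sSup_eq_sSup_sInf_of_minimal_transversals (F := (FΓ : Set _)) hXne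
    (fun h _ => Finset.powersetCard_mono h.subset_univ)
    (fun h hh => Finset.powersetCard_nonempty.2 (hcard h hh)) hFΓ (fun s => ∑ j ∈ s, c j)

/-- Γ-sum bottleneck duality via the Γ-blocker. For a nonempty clutter `X̄`
on `[n]` with all members of size ≥ Γ and its Γ-blocker `F_Γ` (inclusion-minimal families
of size-Γ subsets hitting `binom(h,Γ)` for every `h ∈ X̄`), for every `c : [n] → ℝ`,
`min_{h∈X̄} max_{s⊆h,|s|=Γ} Σ_{j∈s} c_j = max_{y∈F_Γ} min_{s∈y} Σ_{j∈s} c_j`. -/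
theorem gamma_sum_blocker_duality (n Γ : ℕ) (hΓ : 1 ≤ Γ)
    (Xbar : Finset (Finset (Fin n))) (hXne : Xbar.Nonempty)
    (hcard : ∀ h ∈ Xbar, Γ ≤ h.card)
    (hclutter : ∀ a ∈ Xbar, ∀ b ∈ Xbar, a ⊆ b → a = b)
    (FΓ : Finset (Finset (Finset (Fin n))))
    (hFΓ : ∀ y : Finset (Finset (Fin n)), y ∈ FΓ ↔
      (y ⊆ Finset.powersetCard Γ (Finset.univ : Finset (Fin n)) ∧
        (∀ h ∈ Xbar, (y ∩ Finset.powersetCard Γ h).Nonempty) ∧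
        ∀ z ⊂ y, ¬ (∀ h ∈ Xbar, (z ∩ Finset.powersetCard Γ h).Nonempty)))
    (c : Fin n → ℝ) :
    sInf {t : ℝ | ∃ h ∈ Xbar, t =
        sSup {u : ℝ | ∃ s ∈ Finset.powersetCard Γ h, u = ∑ j ∈ s, c j}} =
      sSup {t : ℝ | ∃ y ∈ FΓ, t = sInf {u : ℝ | ∃ s ∈ y, u = ∑ j ∈ s, c j}} :=
  gamma_sum_blocker_duality_general n Γ Xbar hXne hcard FΓ hFΓ c
end

section
/- Let X be a nonempty finite collection of subsets of [n], each of size at least Γ, let c̄^1,...,c̄^N ∈ ℝ^n, θ ≥ 0, r ≥ 1. Define v_{DΓ} = min_{x∈X} (1/N) Σ_{k∈[N]} max{ max_{s⊆x,|s|=Γ} Σ_{j∈s} c_j : ‖c − c̄^k‖_r ≤ θ } and v^{SAA}_{DΓ} = min_{x∈X} (1/N) Σ_{k∈[N]} max_{s⊆x,|s|=Γ} Σ_{j∈s} c̄^k_j. Then v_{DΓ} = v^{SAA}_{DΓ} + Γ^{(r−1)/r} θ. -/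
/-!
By Hölder's inequality, a perturbation `d` with `‖d‖_r ≤ θ` raises the sum over any `Γ`-subset
by at most `Γ^{(r-1)/r} θ`, and spreading `θ` evenly over a subset that is optimal for `c̄^k`
attains this bound. So each inner worst case is the SAA value shifted by the constant
`Γ^{(r-1)/r} θ`, which passes through the average over `k` and the minimum over `X`.
-/

open Finset

theorem Finset.sSup_setOf_exists_mem_eq {ι α : Type*} [ConditionallyCompleteLinearOrder α]
    (s : Finset ι) (hs : s.Nonempty) (f : ι → α) :
    sSup {b | ∃ a ∈ s, b = f a} = s.sup' hs f := by
  rw [sup'_eq_csSup_image]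
  congr 1
  ext b
  simp [eq_comm]

theorem Finset.sInf_setOf_exists_mem_eq {ι α : Type*} [ConditionallyCompleteLinearOrder α]
    (s : Finset ι) (hs : s.Nonempty) (f : ι → α) :
    sInf {b | ∃ a ∈ s, b = f a} = s.inf' hs f :=
  Finset.sSup_setOf_exists_mem_eq (α := αᵒᵈ) s hs f

theorem sum_le_card_rpow_mul_lpNorm {n : ℕ} {r : ℝ} (hr : 1 ≤ r) (s : Finset (Fin n))
    (d : Fin n → ℝ) : ∑ j ∈ s, d j ≤ (#s : ℝ) ^ ((r - 1) / r) * lpNorm r d := by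
  have hr0 : 0 < r := one_pos.trans_le hr
  calc ∑ j ∈ s, d j ≤ ∑ j ∈ s, |d j| := sum_le_sum fun j _ => le_abs_self _
    _ = ((∑ j ∈ s, |d j|) ^ r) ^ (1 / r) := by
      rw [one_div, Real.rpow_rpow_inv (by positivity) hr0.ne']
    _ ≤ ((#s : ℝ) ^ (r - 1) * ∑ j ∈ s, |d j| ^ r) ^ (1 / r) := by
      gcongr
      exact Real.rpow_sum_le_const_mul_sum_rpow s d hr
    _ = (#s : ℝ) ^ ((r - 1) / r) * (∑ j ∈ s, |d j| ^ r) ^ (1 / r) := by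
      rw [Real.mul_rpow (by positivity) (by positivity), ← Real.rpow_mul (by positivity),
        mul_one_div]
    _ ≤ (#s : ℝ) ^ ((r - 1) / r) * lpNorm r d := by
      unfold lpNorm
      gcongr
      exact subset_univ s

theorem lpNorm_ite_const {n : ℕ} {r a : ℝ} (hr : r ≠ 0) (ha : 0 ≤ a) (s : Finset (Fin n)) :
    lpNorm r (fun j => if j ∈ s then a else 0) = (#s : ℝ) ^ (1 / r) * a := by
  have hpow (j : Fin n) : |if j ∈ s then a else 0| ^ r = if j ∈ s then a ^ r else 0 := by
    split_ifs <;> simp [abs_of_nonneg ha, Real.zero_rpow hr]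
  simp only [lpNorm, hpow, sum_ite_mem, univ_inter, sum_const, nsmul_eq_mul]
  rw [Real.mul_rpow (by positivity) (by positivity), one_div, Real.rpow_rpow_inv ha hr]

theorem exists_lpNorm_eq_and_sum_eq {n : ℕ} {r θ : ℝ} (hr : r ≠ 0) (hθ : 0 ≤ θ)
    {s : Finset (Fin n)} (hs : s.Nonempty) :
    ∃ d : Fin n → ℝ, lpNorm r d = θ ∧ ∑ j ∈ s, d j = (#s : ℝ) ^ ((r - 1) / r) * θ := by
  have hm : 0 < (#s : ℝ) := by exact_mod_cast hs.card_pos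
  have hm' : 0 < (#s : ℝ) ^ (1 / r) := by positivity
  refine ⟨fun j => if j ∈ s then θ / (#s : ℝ) ^ (1 / r) else 0, ?_, ?_⟩
  · rw [lpNorm_ite_const hr (by positivity)]
    field_simp
  · rw [sum_ite_mem, inter_self, sum_const, nsmul_eq_mul, sub_div, div_self hr,
      Real.rpow_sub hm, Real.rpow_one, one_div]
    ring

variable {n : ℕ} {r θ : ℝ} {Γ : ℕ}

theorem sup'_sum_le_of_lpNorm_sub_le (hr : 1 ≤ r) {P : Finset (Finset (Fin n))}
    (hP : P.Nonempty) (hPcard : ∀ s ∈ P, #s = Γ) {c cb : Fin n → ℝ}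
    (hc : lpNorm r (fun j => c j - cb j) ≤ θ) :
    P.sup' hP (fun s => ∑ j ∈ s, c j) ≤
      P.sup' hP (fun s => ∑ j ∈ s, cb j) + (Γ : ℝ) ^ ((r - 1) / r) * θ := by
  refine sup'_le _ _ fun s hs => ?_
  have hshift : ∑ j ∈ s, (c j - cb j) ≤ (Γ : ℝ) ^ ((r - 1) / r) * θ := by
    rw [← hPcard s hs]
    exact (sum_le_card_rpow_mul_lpNorm hr s _).trans (by gcongr)
  calc ∑ j ∈ s, c j = ∑ j ∈ s, cb j + ∑ j ∈ s, (c j - cb j) := by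
        rw [← sum_add_distrib]; simp
    _ ≤ _ := add_le_add (le_sup' (fun s => ∑ j ∈ s, cb j) hs) hshift

theorem isGreatest_sup'_sum_lpNorm_ball (hr : 1 ≤ r) (hθ : 0 ≤ θ) (hΓ : 0 < Γ)
    {P : Finset (Finset (Fin n))} (hP : P.Nonempty) (hPcard : ∀ s ∈ P, #s = Γ)
    (cb : Fin n → ℝ) :
    IsGreatest {u | ∃ c : Fin n → ℝ, lpNorm r (fun j => c j - cb j) ≤ θ ∧
        u = P.sup' hP (fun s => ∑ j ∈ s, c j)}
      (P.sup' hP (fun s => ∑ j ∈ s, cb j) + (Γ : ℝ) ^ ((r - 1) / r) * θ) := by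
  refine ⟨?_, fun u ⟨c, hc, hu⟩ => hu ▸ sup'_sum_le_of_lpNorm_sub_le hr hP hPcard hc⟩
  obtain ⟨s₀, hs₀, hmax⟩ := exists_mem_eq_sup' hP (fun s => ∑ j ∈ s, cb j)
  have hs₀card := hPcard s₀ hs₀
  obtain ⟨d, hd, hsum⟩ := exists_lpNorm_eq_and_sum_eq (r := r) (by positivity) hθ
    (card_pos.mp (hs₀card ▸ hΓ))
  have hball : lpNorm r (fun j => (cb j + d j) - cb j) ≤ θ := by simpa using hd.le
  refine ⟨fun j => cb j + d j, hball,
    le_antisymm ?_ (sup'_sum_le_of_lpNorm_sub_le hr hP hPcard hball)⟩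
  calc P.sup' hP (fun s => ∑ j ∈ s, cb j) + (Γ : ℝ) ^ ((r - 1) / r) * θ
      = ∑ j ∈ s₀, (cb j + d j) := by rw [sum_add_distrib, hsum, hs₀card, hmax]
    _ ≤ _ := le_sup' (fun s => ∑ j ∈ s, (cb j + d j)) hs₀

theorem sSup_lpNorm_ball_sSup_sum_powersetCard (hr : 1 ≤ r) (hθ : 0 ≤ θ) (hΓ : 0 < Γ)
    {x : Finset (Fin n)} (hx : Γ ≤ #x) (cb : Fin n → ℝ) :
    sSup {u | ∃ c : Fin n → ℝ, lpNorm r (fun j => c j - cb j) ≤ θ ∧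
        u = sSup {w | ∃ s ∈ powersetCard Γ x, w = ∑ j ∈ s, c j}} =
      sSup {w | ∃ s ∈ powersetCard Γ x, w = ∑ j ∈ s, cb j} +
        (Γ : ℝ) ^ ((r - 1) / r) * θ := by
  have hP : (powersetCard Γ x).Nonempty := powersetCard_nonempty.mpr hx
  simp_rw [sSup_setOf_exists_mem_eq _ hP]
  exact (isGreatest_sup'_sum_lpNorm_ball hr hθ hΓ hP
    (fun s hs => (mem_powersetCard.mp hs).2) cb).csSup_eq

/-- For DRΓBCP-D under the ∞-Wasserstein worst case (each empirical point
perturbed within an ℓ_r-ball of radius θ), `v_{DΓ} = v^{SAA}_{DΓ} + Γ^{(r−1)/r} θ`. -/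
theorem drgbcp_d_eq_saa_plus_radius (n N Γ : ℕ) (hN : 0 < N) (hΓ : 1 ≤ Γ)
    (X : Finset (Finset (Fin n))) (hX : X.Nonempty) (hcard : ∀ x ∈ X, Γ ≤ x.card)
    (cbar : Fin N → Fin n → ℝ) (θ r : ℝ) (hθ : 0 ≤ θ) (hr : 1 ≤ r)
    (vDΓ vSAA : ℝ)
    (hvDΓ : vDΓ = sInf {t : ℝ | ∃ x ∈ X, t = (1 / N : ℝ) * ∑ k : Fin N,
      sSup {u : ℝ | ∃ c : Fin n → ℝ, lpNorm r (fun j => c j - cbar k j) ≤ θ ∧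
        u = sSup {w : ℝ | ∃ s ∈ Finset.powersetCard Γ x, w = ∑ j ∈ s, c j}}})
    (hvSAA : vSAA = sInf {t : ℝ | ∃ x ∈ X, t = (1 / N : ℝ) * ∑ k : Fin N,
      sSup {w : ℝ | ∃ s ∈ Finset.powersetCard Γ x, w = ∑ j ∈ s, cbar k j}}) :
    vDΓ = vSAA + (Γ : ℝ) ^ ((r - 1) / r) * θ := by
  set K := (Γ : ℝ) ^ ((r - 1) / r) * θ
  have hmean (a : Fin N → ℝ) : (1 / N : ℝ) * ∑ k, (a k + K) = (1 / N : ℝ) * ∑ k, a k + K := by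
    rw [sum_add_distrib, sum_const, card_univ, Fintype.card_fin, nsmul_eq_mul]
    field_simp
  rw [hvSAA, hvDΓ, sInf_setOf_exists_mem_eq _ hX, sInf_setOf_exists_mem_eq _ hX,
    apply_inf'_eq_inf'_comp hX (· + K) fun a b => (min_add_add_right a b K).symm]
  refine inf'_congr hX rfl fun x hx => ?_
  simp only [sSup_lpNorm_ball_sSup_sum_powersetCard hr hθ hΓ (hcard x hx)]
  exact hmean _
end

section
/- Fix a nonempty finite set y ⊆ [n], c̄ ∈ ℝ^n sorted on y as c̄_{y_1} ≤ ... ≤ c̄_{y_{|y|}}, and θ ≥ 0 with r = 1. Let t* = max{ t : Σ_{j∈y, t ≥ c̄_j} (t − c̄_j) ≤ θ }. Then there exists a unique index m ∈ {1,...,|y|} such that c̄_{y_m} ≤ (Σ_{i=1}^m c̄_{y_i} + θ)/m < c̄_{y_{m+1}} (with c̄_{y_{|y|+1}} := +∞), and t* = (Σ_{i=1}^m c̄_{y_i} + θ)/m. -/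
/-!
Write `F(t) = Σ_{j ∈ y, c̄_j ≤ t} (t - c̄_j)` for the budget needed to raise every cost below `t`
up to `t`. Beyond a level `t` with `F(t) = θ` and at least one active cost, `F` grows at least
linearly, so such a `t` is the largest feasible level. If `m` satisfies the sandwiching condition,
the active costs at `T_m = (Σ_{i<m} c̄_{y_i} + θ)/m` are exactly the `m` smallest ones, so
`F(T_m) = m T_m - Σ_{i<m} c̄_{y_i} = θ` and `t* = T_m`; distinct admissible indices would give
strictly increasing levels, hence the index is unique. For existence, the largest `m` with
`c̄_{y_m} ≤ T_m` satisfies the upper bound as well, since `T_{m+1}` is a weighted average of `T_m`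
and `c̄_{y_{m+1}}`.
-/

open Finset

section FillCost

variable {α : Type*} (s : Finset α) (c : α → ℝ)

noncomputable def fillCost (t : ℝ) : ℝ := ∑ j ∈ s.filter (fun j => c j ≤ t), (t - c j)

variable {s c}

theorem fillCost_add_card_mul_le {t t' : ℝ} (h : t ≤ t') :
    fillCost s c t + #(s.filter (fun j => c j ≤ t)) * (t' - t) ≤ fillCost s c t' := by
  have hsub : s.filter (fun j => c j ≤ t) ⊆ s.filter (fun j => c j ≤ t') :=
    monotone_filter_right s fun _ _ hj => hj.trans h
  calc fillCost s c t + #(s.filter (fun j => c j ≤ t)) * (t' - t)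
      = ∑ j ∈ s.filter (fun j => c j ≤ t), (t' - c j) := by
        simp only [fillCost, sum_sub_distrib, sum_const, nsmul_eq_mul]
        ring
    _ ≤ fillCost s c t' :=
        sum_le_sum_of_subset_of_nonneg hsub fun j hj _ => sub_nonneg.mpr (mem_filter.mp hj).2

theorem isGreatest_fillCost_le {t θ : ℝ} (hne : (s.filter (fun j => c j ≤ t)).Nonempty)
    (ht : fillCost s c t = θ) : IsGreatest {t' | fillCost s c t' ≤ θ} t := by
  refine ⟨ht.le, fun t' (ht' : fillCost s c t' ≤ θ) => ?_⟩
  by_contra! hlt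
  have hcard : (0 : ℝ) < #(s.filter (fun j => c j ≤ t)) := by exact_mod_cast hne.card_pos
  have := fillCost_add_card_mul_le (s := s) (c := c) hlt.le
  have := mul_pos hcard (sub_pos.mpr hlt)
  linarith

end FillCost

section SortedEnumeration

variable {α : Type*} [DecidableEq α] {s : Finset α} {e : ℕ → α}

theorem image_range_card_eq (hmem : ∀ i, i < #s → e i ∈ s)
    (hinj : ∀ i j, i < #s → j < #s → e i = e j → i = j) : (range #s).image e = s := by
  refine eq_of_subset_of_card_le (fun j hj => ?_) ?_
  · obtain ⟨i, hi, rfl⟩ := mem_image.mp hj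
    exact hmem i (mem_range.mp hi)
  · rw [card_image_of_injOn fun i hi j hj => hinj i j (mem_range.mp hi) (mem_range.mp hj),
      card_range]

theorem filter_le_eq_image_range {c : α → ℝ} {t : ℝ} {m : ℕ}
    (hmem : ∀ i, i < #s → e i ∈ s) (hinj : ∀ i j, i < #s → j < #s → e i = e j → i = j)
    (hm : m ≤ #s) (hlow : ∀ i < m, c (e i) ≤ t) (hhigh : ∀ i, m ≤ i → i < #s → t < c (e i)) :
    s.filter (fun j => c j ≤ t) = (range m).image e := by
  ext j
  rw [mem_filter, mem_image]
  constructor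
  · rintro ⟨hj, hjt⟩
    rw [← image_range_card_eq hmem hinj] at hj
    obtain ⟨i, hi, rfl⟩ := mem_image.mp hj
    refine ⟨i, mem_range.mpr ?_, rfl⟩
    by_contra! hmi
    exact (hhigh i hmi (mem_range.mp hi)).not_ge hjt
  · rintro ⟨i, hi, rfl⟩
    have hi := mem_range.mp hi
    exact ⟨hmem i (hi.trans_le hm), hlow i hi⟩

theorem fillCost_eq_of_filter_eq_image_range {c : α → ℝ} {t : ℝ} {m : ℕ}
    (hinj : ∀ i j, i < #s → j < #s → e i = e j → i = j) (hm : m ≤ #s)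
    (hfilter : s.filter (fun j => c j ≤ t) = (range m).image e) :
    fillCost s c t = m * t - ∑ i ∈ range m, c (e i) := by
  have hinjOn : Set.InjOn e (range m) := fun i hi j hj =>
    hinj i j ((mem_range.mp hi).trans_le hm) ((mem_range.mp hj).trans_le hm)
  rw [fillCost, hfilter, sum_image hinjOn, sum_sub_distrib, sum_const, card_range, nsmul_eq_mul]

end SortedEnumeration

section Level

variable {a : ℕ → ℝ} {θ : ℝ} {N m m' : ℕ}

/-- The common level reached when the budget `θ` raises `a 0, …, a (m - 1)`. -/
noncomputable def level (a : ℕ → ℝ) (θ : ℝ) (m : ℕ) : ℝ := ((∑ i ∈ range m, a i) + θ) / m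

theorem mul_level (hm : 1 ≤ m) : m * level a θ m = (∑ i ∈ range m, a i) + θ := by
  have : (m : ℝ) ≠ 0 := by positivity
  rw [level, mul_div_cancel₀ _ this]

theorem level_lt_of_level_succ_lt (hm : 1 ≤ m) (h : level a θ (m + 1) < a m) :
    level a θ m < a m := by
  have hsucc := mul_level (a := a) (θ := θ) (Nat.le_add_left 1 m)
  have hcur := mul_level (a := a) (θ := θ) hm
  rw [sum_range_succ] at hsucc
  have hm' : (1 : ℝ) ≤ m := by exact_mod_cast hm
  push_cast at hsucc
  nlinarith

def IsFillIndex (a : ℕ → ℝ) (θ : ℝ) (N m : ℕ) : Prop :=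
  1 ≤ m ∧ m ≤ N ∧ a (m - 1) ≤ level a θ m ∧ (m = N ∨ level a θ m < a m)

theorem exists_isFillIndex (hN : 1 ≤ N) (hθ : 0 ≤ θ) : ∃ m, IsFillIndex a θ N m := by
  classical
  let P : ℕ → Prop := fun m => 1 ≤ m ∧ a (m - 1) ≤ level a θ m
  have hP1 : P 1 := ⟨le_rfl, by simp [level, hθ]⟩
  set M := Nat.findGreatest P N
  have hPM : P M := Nat.findGreatest_spec hN hP1
  have hMN : M ≤ N := Nat.findGreatest_le N
  refine ⟨M, hPM.1, hMN, hPM.2, hMN.eq_or_lt.imp id fun hlt => ?_⟩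
  have hnext : ¬ P (M + 1) := Nat.findGreatest_is_greatest (Nat.lt_succ_self M) hlt
  refine level_lt_of_level_succ_lt hPM.1 (not_le.mp fun hle => hnext ⟨?_, ?_⟩)
  · omega
  · simpa using hle

theorem IsFillIndex.level_lt_level (hmono : ∀ i j, i ≤ j → j < N → a i ≤ a j)
    (hm : IsFillIndex a θ N m) (hm' : IsFillIndex a θ N m') (hlt : m < m') :
    level a θ m < level a θ m' := by
  have hm'N := hm'.2.1
  calc level a θ m < a m := hm.2.2.2.resolve_left (by omega)
    _ ≤ a (m' - 1) := hmono m (m' - 1) (by omega) (by omega)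
    _ ≤ level a θ m' := hm'.2.2.1

theorem IsFillIndex.isGreatest_level {α : Type*} [DecidableEq α] {s : Finset α} {c : α → ℝ}
    {e : ℕ → α}
    (hmem : ∀ i, i < #s → e i ∈ s) (hinj : ∀ i j, i < #s → j < #s → e i = e j → i = j)
    (hmono : ∀ i j, i ≤ j → j < #s → c (e i) ≤ c (e j))
    (hm : IsFillIndex (fun i => c (e i)) θ #s m) :
    IsGreatest {t | fillCost s c t ≤ θ} (level (fun i => c (e i)) θ m) := by
  obtain ⟨hm1, hmN, hlow, hhigh⟩ := hm
  have hfilter := filter_le_eq_image_range hmem hinj hmN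
    (fun i hi => (hmono i (m - 1) (by omega) (by omega)).trans hlow)
    (fun i hi hiN => hhigh.elim (fun h => by omega) fun h => h.trans_le (hmono m i hi hiN))
  refine isGreatest_fillCost_le ?_ ?_
  · rw [hfilter]
    exact (nonempty_range_iff.mpr (by omega)).image e
  · rw [fillCost_eq_of_filter_eq_image_range hinj hmN hfilter, mul_level hm1]
    ring

end Level

/-- Closed-form L1 solution of the robust bottleneck inner problem.
With `e` enumerating `y` in nondecreasing order of `c̄` and
`t* = max { t : Σ_{j∈y, t ≥ c̄_j} (t − c̄_j) ≤ θ }`, there is a unique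
`m ∈ {1,…,|y|}` with `c̄_{y_m} ≤ (Σ_{i=1}^m c̄_{y_i} + θ)/m < c̄_{y_{m+1}}`
(last condition void when `m = |y|`), and `t*` equals that quotient. -/
theorem robust_bottleneck_l1_closed_form (n : ℕ) (y : Finset (Fin n))
    (hy : y.Nonempty) (cbar : Fin n → ℝ) (θ : ℝ) (hθ : 0 ≤ θ)
    (e : ℕ → Fin n)
    (hmem : ∀ i, i < y.card → e i ∈ y)
    (hinj : ∀ i j, i < y.card → j < y.card → e i = e j → i = j)
    (hmono : ∀ i j, i ≤ j → j < y.card → cbar (e i) ≤ cbar (e j))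
    (tstar : ℝ)
    (ht : IsGreatest
      {t : ℝ | ∑ j ∈ y.filter (fun j => cbar j ≤ t), (t - cbar j) ≤ θ} tstar) :
    (∃! m : ℕ, 1 ≤ m ∧ m ≤ y.card ∧
      cbar (e (m - 1)) ≤ ((∑ i ∈ Finset.range m, cbar (e i)) + θ) / m ∧
      (m = y.card ∨ ((∑ i ∈ Finset.range m, cbar (e i)) + θ) / m < cbar (e m))) ∧
    ∀ m : ℕ, (1 ≤ m ∧ m ≤ y.card ∧
      cbar (e (m - 1)) ≤ ((∑ i ∈ Finset.range m, cbar (e i)) + θ) / m ∧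
      (m = y.card ∨ ((∑ i ∈ Finset.range m, cbar (e i)) + θ) / m < cbar (e m))) →
      tstar = ((∑ i ∈ Finset.range m, cbar (e i)) + θ) / m := by
  have htstar : ∀ m, IsFillIndex (fun i => cbar (e i)) θ y.card m →
      tstar = level (fun i => cbar (e i)) θ m := fun m hm =>
    ht.unique (hm.isGreatest_level hmem hinj hmono)
  refine ⟨?_, htstar⟩
  obtain ⟨M, hM⟩ := exists_isFillIndex (a := fun i => cbar (e i)) (card_pos.mpr hy) hθ
  refine ⟨M, hM, fun m (hm : IsFillIndex (fun i => cbar (e i)) θ y.card m) => ?_⟩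
  have hlevel : level (fun i => cbar (e i)) θ m = level (fun i => cbar (e i)) θ M := by
    rw [← htstar m hm, ← htstar M hM]
  rcases lt_trichotomy m M with hlt | heq | hgt
  · exact absurd hlevel (hm.level_lt_level hmono hM hlt).ne
  · exact heq
  · exact absurd hlevel (hM.level_lt_level hmono hm hgt).ne'
end
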